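/- Let X ⊆ ℝ^n be convex, u : ℝ^n → ℝ convex and differentiable, and g_1, …, g_m : ℝ^n → ℝ differentiable with g_j being (μ_j, q_j)-uniformly convex (μ_j ≥ 0, q_j ≥ 1). Let h : ℝ^m → ℝ be convex, componentwise nondecreasing, and differentiable with L_h-Lipschitz gradient for some L_h > 0, and let h* be its Fenchel conjugate. Let x⋆ ∈ X, set g = (g_1, …, g_m) and λ⋆ = ∇h(g(x⋆)), assume Σ_j λ⋆_j μ_j > 0, and assume first-order optimality: ⟨∇u(x⋆) + Σ_j λ⋆_j ∇g_j(x⋆), x − x⋆⟩ ≥ 0 for all x ∈ X. Let ε > 0 and let μ_ε > 0 be the unique positive solution of μ/2 = Σ_{j=1}^m λ⋆_j (μ_j/(q_j+1)) (ε/μ)^{(q_j−1)/2}. Then for all x ∈ X and all λ ∈ dom h*: [⟨λ⋆, g(x)⟩ − h*(λ⋆) + u(x)] − [⟨λ, g(x⋆)⟩ − h*(λ) + u(x⋆)] ≥ (μ_ε/2)‖x − x⋆‖² + (1/(2L_h))‖λ − λ⋆‖² − ε/2. -/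

import Mathlib

open scoped RealInnerProductSpace BigOperators

/-!
By the Fenchel–Young equality `h*(λ⋆) = ⟨λ⋆, g(x⋆)⟩ - h(g(x⋆))` (as `λ⋆ = ∇h(g(x⋆))` and `h` is
convex), the gap splits into a dual part `h*(λ) - ⟨λ, g(x⋆)⟩ + h(g(x⋆))` and a primal part
`⟨λ⋆, g(x) - g(x⋆)⟩ + u(x) - u(x⋆)`.

Dual part: testing the supremum defining `h*(λ)` at `g(x⋆) + L_h⁻¹ (λ - λ⋆)` and bounding `h` there
by the descent lemma for the `L_h`-Lipschitz gradient shows that it is at least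
`‖λ - λ⋆‖² / (2 L_h)`.

Primal part: `λ⋆ ≥ 0` because `h` is nondecreasing, so the uniform convexity inequalities of the
`g_j` weighted by `λ⋆_j`, the gradient inequality of `u` and first-order optimality bound it below
by `∑ⱼ λ⋆_j μ_j/(q_j+1) r^(q_j+1)`, `r = ‖x - x⋆‖`. Weighted AM–GM gives
`s^((q-1)/2) r² ≤ r^(q+1) + s^((q+1)/2)` for `s = ε/μ_ε`, and summing these with the weights of the
defining equation of `μ_ε` gives `μ_ε r²/2 - ε/2`.
-/

/-- Fenchel conjugate of a real-valued function on `ℝ^m`, valued in `EReal`. -/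
noncomputable def fenchelConjR {m : ℕ} (h : EuclideanSpace ℝ (Fin m) → ℝ)
    (s : EuclideanSpace ℝ (Fin m)) : EReal :=
  ⨆ z : EuclideanSpace ℝ (Fin m), ((⟪s, z⟫ - h z : ℝ) : EReal)

open Set

section Gradient

variable {E : Type*} [NormedAddCommGroup E] [InnerProductSpace ℝ E] [CompleteSpace E]
  {f : E → ℝ}

theorem HasGradientAt.hasDerivAt_add_smul {f' x d : E} {t : ℝ}
    (hf : HasGradientAt f f' (x + t • d)) :
    HasDerivAt (fun s : ℝ => f (x + s • d)) ⟪f', d⟫ t := by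
  have hline : HasDerivAt (fun s : ℝ => x + s • d) d t := by
    simpa using ((hasDerivAt_id t).smul_const d).const_add x
  simpa [InnerProductSpace.toDual_apply_apply, Function.comp_def] using
    (hasGradientAt_iff_hasFDerivAt.mp hf).comp_hasDerivAt t hline

theorem ConvexOn.add_inner_le_of_hasGradientAt (hf : ConvexOn ℝ univ f) {f' x : E}
    (hx : HasGradientAt f f' x) (y : E) : f x + ⟪f', y - x⟫ ≤ f y := by
  have hline : ConvexOn ℝ univ fun s : ℝ => f (x + s • (y - x)) := by
    simpa [Function.comp_def, AffineMap.lineMap_apply_module', add_comm] using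
      hf.comp_affineMap (AffineMap.lineMap x y)
  have hder : HasDerivAt (fun s : ℝ => f (x + s • (y - x))) ⟪f', y - x⟫ 0 :=
    HasGradientAt.hasDerivAt_add_smul (by simpa using hx)
  have hslope := hline.le_slope_of_hasDerivAt (mem_univ 0) (mem_univ 1) zero_lt_one hder
  simp only [slope_def_field, one_smul, add_sub_cancel, zero_smul, add_zero, sub_zero,
    div_one] at hslope
  linarith

theorem le_add_inner_add_sq_of_lipschitz_gradient {f' : E → E}
    (hf : ∀ z, HasGradientAt f (f' z) z) {L : ℝ} (hL : ∀ z w, ‖f' z - f' w‖ ≤ L * ‖z - w‖)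
    (z w : E) : f w ≤ f z + ⟪f' z, w - z⟫ + L / 2 * ‖w - z‖ ^ 2 := by
  set d := w - z
  let φ : ℝ → ℝ := fun t => f (z + t • d) - t * ⟪f' z, d⟫ - L / 2 * t ^ 2 * ‖d‖ ^ 2
  have hφ' : ∀ t, HasDerivAt φ (⟪f' (z + t • d), d⟫ - ⟪f' z, d⟫ - L * t * ‖d‖ ^ 2) t := by
    intro t
    refine ((((hf (z + t • d)).hasDerivAt_add_smul).sub
      ((hasDerivAt_id t).mul_const ⟪f' z, d⟫)).sub
      (((hasDerivAt_pow 2 t).const_mul (L / 2)).mul_const (‖d‖ ^ 2))).congr_deriv ?_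
    ring
  have hanti : AntitoneOn φ (Icc 0 1) := by
    refine antitoneOn_of_hasDerivWithinAt_nonpos (convex_Icc 0 1)
      (fun t _ => (hφ' t).continuousAt.continuousWithinAt)
      (fun t _ => (hφ' t).hasDerivWithinAt) fun t ht => ?_
    rw [interior_Icc] at ht
    have hlip : ‖f' (z + t • d) - f' z‖ ≤ L * (t * ‖d‖) := by
      simpa [norm_smul, abs_of_pos ht.1] using hL (z + t • d) z
    have := real_inner_le_norm (f' (z + t • d) - f' z) d
    rw [inner_sub_left] at this
    nlinarith [norm_nonneg d]
  have h01 := hanti (left_mem_Icc.2 zero_le_one) (right_mem_Icc.2 zero_le_one) zero_le_one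
  simp only [one_smul, add_sub_cancel, one_mul, one_pow, mul_one, zero_smul, add_zero, zero_mul,
    sub_zero, ne_eq, OfNat.ofNat_ne_zero, not_false_eq_true, zero_pow, mul_zero,
    tsub_le_iff_right, φ, d] at h01
  linarith

theorem inner_sub_add_sq_le_of_lipschitz_gradient {f' : E → E}
    (hf : ∀ z, HasGradientAt f (f' z) z) {L : ℝ} (hL₀ : 0 < L)
    (hL : ∀ z w, ‖f' z - f' w‖ ≤ L * ‖z - w‖) (z s : E) :
    ⟪s, z⟫ - f z + 1 / (2 * L) * ‖s - f' z‖ ^ 2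
      ≤ ⟪s, z + L⁻¹ • (s - f' z)⟫ - f (z + L⁻¹ • (s - f' z)) := by
  have hdesc := le_add_inner_add_sq_of_lipschitz_gradient hf hL z (z + L⁻¹ • (s - f' z))
  have hsq : ⟪s - f' z, s - f' z⟫ = ‖s - f' z‖ ^ 2 := real_inner_self_eq_norm_sq _
  simp only [add_sub_cancel_left, real_inner_smul_right, norm_smul, Real.norm_eq_abs,
    abs_inv, abs_of_pos hL₀, inner_add_right] at hdesc ⊢
  rw [inner_sub_left] at hsq
  field_simp at hdesc ⊢
  nlinarith

theorem sum_mul_rpow_le_of_first_order_optimal {ι : Type*} [Fintype ι] {u : E → ℝ}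
    {g : ι → E → ℝ} {u' : E} {g' : ι → E} {μ q lam : ι → ℝ} {x xs : E} (hlam : ∀ j, 0 ≤ lam j)
    (hu : ConvexOn ℝ univ u) (hu' : HasGradientAt u u' xs)
    (hg : ∀ j, g j xs + ⟪g' j, x - xs⟫ + μ j / (q j + 1) * ‖x - xs‖ ^ (q j + 1) ≤ g j x)
    (hopt : 0 ≤ ⟪u' + ∑ j, lam j • g' j, x - xs⟫) :
    ∑ j, lam j * (μ j / (q j + 1)) * ‖x - xs‖ ^ (q j + 1)
      ≤ (∑ j, lam j * g j x + u x) - (∑ j, lam j * g j xs + u xs) := by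
  have hux := hu.add_inner_le_of_hasGradientAt hu' x
  have hsum := Finset.sum_le_sum fun j (_ : j ∈ Finset.univ) =>
    mul_le_mul_of_nonneg_left (hg j) (hlam j)
  simp only [mul_add, Finset.sum_add_distrib, ← mul_assoc] at hsum
  simp only [inner_add_left, sum_inner, real_inner_smul_left] at hopt
  linarith

end Gradient

theorem EuclideanSpace.nonneg_apply_of_hasGradientAt_of_monotone {ι : Type*} [Fintype ι]
    {f : EuclideanSpace ℝ ι → ℝ} {f' z : EuclideanSpace ℝ ι}
    (hmono : ∀ a b : EuclideanSpace ℝ ι, (∀ j, a j ≤ b j) → f a ≤ f b)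
    (hf : HasGradientAt f f' z) (j : ι) : 0 ≤ f' j := by
  classical
  have hder : HasDerivAt (fun s : ℝ => f (z + s • EuclideanSpace.single j 1))
      ⟪f', EuclideanSpace.single j 1⟫ 0 :=
    HasGradientAt.hasDerivAt_add_smul (by simpa using hf)
  have hline : Monotone fun s : ℝ => f (z + s • EuclideanSpace.single j 1) := by
    intro a b hab
    refine hmono _ _ fun i => ?_
    by_cases hij : i = j
    · subst hij; simpa using hab
    · simp [hij]
  simpa [EuclideanSpace.inner_single_right] using hder.nonneg_of_monotone hline

theorem le_fenchelConjR {m : ℕ} (h : EuclideanSpace ℝ (Fin m) → ℝ)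
    (s z : EuclideanSpace ℝ (Fin m)) : ((⟪s, z⟫ - h z : ℝ) : EReal) ≤ fenchelConjR h s :=
  le_iSup (fun z => ((⟪s, z⟫ - h z : ℝ) : EReal)) z

theorem exists_fenchelConjR_eq_coe {m : ℕ} {h : EuclideanSpace ℝ (Fin m) → ℝ}
    {s : EuclideanSpace ℝ (Fin m)} (hs : fenchelConjR h s < ⊤) :
    ∃ t : ℝ, fenchelConjR h s = t :=
  ⟨_, (EReal.coe_toReal hs.ne (ne_bot_of_le_ne_bot (EReal.coe_ne_bot _)
    (le_fenchelConjR h s 0))).symm⟩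

theorem fenchelConjR_eq_of_hasGradientAt {m : ℕ} {h : EuclideanSpace ℝ (Fin m) → ℝ}
    (hconv : ConvexOn ℝ univ h) {s z : EuclideanSpace ℝ (Fin m)} (hz : HasGradientAt h s z) :
    fenchelConjR h s = ((⟪s, z⟫ - h z : ℝ) : EReal) := by
  refine le_antisymm (iSup_le fun w => EReal.coe_le_coe_iff.mpr ?_) (le_fenchelConjR h s z)
  have := hconv.add_inner_le_of_hasGradientAt hz w
  rw [inner_sub_right] at this
  linarith

theorem inner_sub_add_sq_le_fenchelConjR {m : ℕ} {h : EuclideanSpace ℝ (Fin m) → ℝ}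
    {h' : EuclideanSpace ℝ (Fin m) → EuclideanSpace ℝ (Fin m)}
    (hh : ∀ z, HasGradientAt h (h' z) z) {L : ℝ} (hL₀ : 0 < L)
    (hL : ∀ z w, ‖h' z - h' w‖ ≤ L * ‖z - w‖) (s z : EuclideanSpace ℝ (Fin m)) :
    ((⟪s, z⟫ - h z + 1 / (2 * L) * ‖s - h' z‖ ^ 2 : ℝ) : EReal) ≤ fenchelConjR h s :=
  (EReal.coe_le_coe_iff.mpr (inner_sub_add_sq_le_of_lipschitz_gradient hh hL₀ hL z s)).trans
    (le_fenchelConjR h s _)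

theorem rpow_mul_sq_le_rpow_add_rpow {r s q : ℝ} (hr : 0 ≤ r) (hs : 0 < s) (hq : 1 ≤ q) :
    s ^ ((q - 1) / 2) * r ^ 2 ≤ r ^ (q + 1) + s ^ ((q + 1) / 2) := by
  have hq₁ : (0 : ℝ) < q + 1 := by linarith
  have hw₁ : 0 ≤ (q - 1) / (q + 1) := div_nonneg (by linarith) hq₁.le
  have hw₂ : 0 ≤ 2 / (q + 1) := div_nonneg zero_le_two hq₁.le
  have hp₁ : 0 ≤ s ^ ((q + 1) / 2) := Real.rpow_nonneg hs.le _
  have hp₂ : 0 ≤ r ^ (q + 1) := Real.rpow_nonneg hr _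
  have hamgm := Real.geom_mean_le_arith_mean2_weighted hw₁ hw₂ hp₁ hp₂ (by field_simp; ring)
  rw [← Real.rpow_mul hs.le, ← Real.rpow_mul hr,
    show (q + 1) / 2 * ((q - 1) / (q + 1)) = (q - 1) / 2 by field_simp,
    show (q + 1) * (2 / (q + 1)) = ((2 : ℕ) : ℝ) by field_simp; norm_num, Real.rpow_natCast]
    at hamgm
  have hb₁ : (q - 1) / (q + 1) ≤ 1 := (div_le_one hq₁).2 (by linarith)
  have hb₂ : 2 / (q + 1) ≤ 1 := (div_le_one hq₁).2 (by linarith)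
  nlinarith [mul_le_mul_of_nonneg_right hb₁ hp₁, mul_le_mul_of_nonneg_right hb₂ hp₂]

theorem half_mul_sq_sub_le_sum_mul_rpow {ι : Type*} [Fintype ι] {c q : ι → ℝ} {ε M r : ℝ}
    (hc : ∀ j, 0 ≤ c j) (hq : ∀ j, 1 ≤ q j) (hε : 0 < ε) (hM : 0 < M) (hr : 0 ≤ r)
    (hMeq : M / 2 = ∑ j, c j * (ε / M) ^ ((q j - 1) / 2)) :
    M / 2 * r ^ 2 - ε / 2 ≤ ∑ j, c j * r ^ (q j + 1) := by
  have hs : 0 < ε / M := div_pos hε hM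
  have hsplit : ∀ j, (ε / M) ^ ((q j + 1) / 2) = (ε / M) ^ ((q j - 1) / 2) * (ε / M) := by
    intro j
    rw [show (q j + 1) / 2 = (q j - 1) / 2 + 1 by ring, Real.rpow_add hs, Real.rpow_one]
  have hsum := Finset.sum_le_sum fun j (_ : j ∈ Finset.univ) =>
    mul_le_mul_of_nonneg_left (rpow_mul_sq_le_rpow_add_rpow hr hs (hq j)) (hc j)
  simp only [mul_add, Finset.sum_add_distrib, hsplit, ← mul_assoc, ← Finset.sum_mul,
    ← hMeq] at hsum
  have hε' : M / 2 * (ε / M) = ε / 2 := by field_simp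
  linarith

theorem stmt15_general {n m : ℕ}
    (X : Set (EuclideanSpace ℝ (Fin n)))
    (u : EuclideanSpace ℝ (Fin n) → ℝ)
    (u' : EuclideanSpace ℝ (Fin n) → EuclideanSpace ℝ (Fin n))
    (huconv : ConvexOn ℝ Set.univ u) (hu' : ∀ x, HasGradientAt u (u' x) x)
    (g : Fin m → EuclideanSpace ℝ (Fin n) → ℝ)
    (g' : Fin m → EuclideanSpace ℝ (Fin n) → EuclideanSpace ℝ (Fin n))
    (μ q : Fin m → ℝ) (hμ : ∀ j, 0 ≤ μ j) (hq : ∀ j, 1 ≤ q j)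
    (huc : ∀ j x y, g j x + ⟪g' j x, y - x⟫ + μ j / (q j + 1) * ‖y - x‖ ^ (q j + 1) ≤ g j y)
    (h : EuclideanSpace ℝ (Fin m) → ℝ)
    (h' : EuclideanSpace ℝ (Fin m) → EuclideanSpace ℝ (Fin m))
    (hhconv : ConvexOn ℝ Set.univ h)
    (hhmono : ∀ z w : EuclideanSpace ℝ (Fin m), (∀ j, z j ≤ w j) → h z ≤ h w)
    (hh' : ∀ z, HasGradientAt h (h' z) z)
    (Lh : ℝ) (hLh : 0 < Lh) (hhLip : ∀ z w, ‖h' z - h' w‖ ≤ Lh * ‖z - w‖)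
    (xstar : EuclideanSpace ℝ (Fin n))
    (gvec : EuclideanSpace ℝ (Fin n) → EuclideanSpace ℝ (Fin m))
    (hgvec : ∀ x j, gvec x j = g j x)
    (lamstar : EuclideanSpace ℝ (Fin m)) (hlamstar : lamstar = h' (gvec xstar))
    (hopt : ∀ x ∈ X, 0 ≤ ⟪u' xstar + ∑ j, lamstar j • g' j xstar, x - xstar⟫)
    (ε με : ℝ) (hε : 0 < ε) (hμε : 0 < με)
    (hμεeq : με / 2 = ∑ j, lamstar j * (μ j / (q j + 1)) * (ε / με) ^ ((q j - 1) / 2)) :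
    ∀ x ∈ X, ∀ lam : EuclideanSpace ℝ (Fin m), fenchelConjR h lam < ⊤ →
      ((με / 2 * ‖x - xstar‖ ^ 2 + 1 / (2 * Lh) * ‖lam - lamstar‖ ^ 2 - ε / 2 : ℝ) : EReal)
        ≤ (((⟪lamstar, gvec x⟫ : ℝ) : EReal) - fenchelConjR h lamstar + (u x : EReal))
          - (((⟪lam, gvec xstar⟫ : ℝ) : EReal) - fenchelConjR h lam + (u xstar : EReal)) := by
  intro x hx lam hlam
  have hgrad : HasGradientAt h lamstar (gvec xstar) := hlamstar ▸ hh' (gvec xstar)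
  have hlamstar_nonneg : ∀ j, 0 ≤ lamstar j :=
    EuclideanSpace.nonneg_apply_of_hasGradientAt_of_monotone hhmono hgrad
  obtain ⟨t, ht⟩ := exists_fenchelConjR_eq_coe hlam
  have hdual : ⟪lam, gvec xstar⟫ - h (gvec xstar) + 1 / (2 * Lh) * ‖lam - lamstar‖ ^ 2 ≤ t := by
    have := inner_sub_add_sq_le_fenchelConjR hh' hLh hhLip lam (gvec xstar)
    rwa [ht, ← hlamstar, EReal.coe_le_coe_iff] at this
  have hinner : ∀ y, ⟪lamstar, gvec y⟫ = ∑ j, lamstar j * g j y := fun y => by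
    simp [PiLp.inner_apply, hgvec, mul_comm]
  have hprimal := sum_mul_rpow_le_of_first_order_optimal hlamstar_nonneg huconv (hu' xstar)
    (fun j => huc j xstar x) (hopt x hx)
  have hgrowth := half_mul_sq_sub_le_sum_mul_rpow
    (fun j => mul_nonneg (hlamstar_nonneg j) (div_nonneg (hμ j) (by linarith [hq j])))
    hq hε hμε (norm_nonneg (x - xstar)) hμεeq
  rw [fenchelConjR_eq_of_hasGradientAt hhconv hgrad, ht]
  norm_cast
  rw [hinner, hinner]
  linarith

/-- Quadratic growth of the gap function via the Approximate Dualized Aggregate convexity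
constant `μ_ε`: under the hypotheses of the growth lemma and with `μ_ε > 0` the (unique)
positive solution of `μ/2 = Σ_j λ⋆_j (μ_j/(q_j+1)) (ε/μ)^{(q_j−1)/2}`, the gap
`[⟨λ⋆, g(x)⟩ − h*(λ⋆) + u(x)] − [⟨λ, g(x⋆)⟩ − h*(λ) + u(x⋆)]` is at least
`(μ_ε/2)‖x − x⋆‖² + (1/(2L_h))‖λ − λ⋆‖² − ε/2`. -/
theorem stmt15 {n m : ℕ}
    (X : Set (EuclideanSpace ℝ (Fin n))) (hX : Convex ℝ X)
    (u : EuclideanSpace ℝ (Fin n) → ℝ)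
    (u' : EuclideanSpace ℝ (Fin n) → EuclideanSpace ℝ (Fin n))
    (huconv : ConvexOn ℝ Set.univ u) (hu' : ∀ x, HasGradientAt u (u' x) x)
    (g : Fin m → EuclideanSpace ℝ (Fin n) → ℝ)
    (g' : Fin m → EuclideanSpace ℝ (Fin n) → EuclideanSpace ℝ (Fin n))
    (hg' : ∀ j x, HasGradientAt (g j) (g' j x) x)
    (μ q : Fin m → ℝ) (hμ : ∀ j, 0 ≤ μ j) (hq : ∀ j, 1 ≤ q j)
    (huc : ∀ j x y, g j x + ⟪g' j x, y - x⟫ + μ j / (q j + 1) * ‖y - x‖ ^ (q j + 1) ≤ g j y)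
    (h : EuclideanSpace ℝ (Fin m) → ℝ)
    (h' : EuclideanSpace ℝ (Fin m) → EuclideanSpace ℝ (Fin m))
    (hhconv : ConvexOn ℝ Set.univ h)
    (hhmono : ∀ z w : EuclideanSpace ℝ (Fin m), (∀ j, z j ≤ w j) → h z ≤ h w)
    (hh' : ∀ z, HasGradientAt h (h' z) z)
    (Lh : ℝ) (hLh : 0 < Lh) (hhLip : ∀ z w, ‖h' z - h' w‖ ≤ Lh * ‖z - w‖)
    (xstar : EuclideanSpace ℝ (Fin n)) (hxstar : xstar ∈ X)
    (gvec : EuclideanSpace ℝ (Fin n) → EuclideanSpace ℝ (Fin m))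
    (hgvec : ∀ x j, gvec x j = g j x)
    (lamstar : EuclideanSpace ℝ (Fin m)) (hlamstar : lamstar = h' (gvec xstar))
    (hμsum : 0 < ∑ j, lamstar j * μ j)
    (hopt : ∀ x ∈ X, 0 ≤ ⟪u' xstar + ∑ j, lamstar j • g' j xstar, x - xstar⟫)
    (ε με : ℝ) (hε : 0 < ε) (hμε : 0 < με)
    (hμεeq : με / 2 = ∑ j, lamstar j * (μ j / (q j + 1)) * (ε / με) ^ ((q j - 1) / 2)) :
    ∀ x ∈ X, ∀ lam : EuclideanSpace ℝ (Fin m), fenchelConjR h lam < ⊤ →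
      ((με / 2 * ‖x - xstar‖ ^ 2 + 1 / (2 * Lh) * ‖lam - lamstar‖ ^ 2 - ε / 2 : ℝ) : EReal)
        ≤ (((⟪lamstar, gvec x⟫ : ℝ) : EReal) - fenchelConjR h lamstar + (u x : EReal))
          - (((⟪lam, gvec xstar⟫ : ℝ) : EReal) - fenchelConjR h lam + (u xstar : EReal)) :=
  stmt15_general X u u' huconv hu' g g' μ q hμ hq huc h h' hhconv hhmono hh' Lh hLh hhLip xstar gvec
    hgvec lamstar hlamstar hopt ε με hε hμε hμεeq
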